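/- arXiv:2408.00815 — 5 statements merged into one kernel-verified Lean document; each statement's English description precedes it below -/
import Mathlib

section
/- There exists an edge coloring of the complete graph on 16 vertices in three colors containing no monochromatic triangle. Precisely: there exists a symmetric function c : Fin 16 → Fin 16 → Fin 3 such that there are no three pairwise distinct vertices x, y, z in Fin 16 with c x y = c y z = c x z. -/
/-!
Greenwood–Gleason: identify the vertices with the field `𝔽₁₆` and colour the edge `xy` by
`(x - y) ^ 5`. Since `a ^ 15 = 1` for `a ≠ 0`, the colours are cube roots of unity, so three
colours suffice, and in characteristic 2 the colouring is symmetric. A monochromatic triangle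
`x, y, z` gives `a = x - y`, `b = y - z` with `a ^ 5 = b ^ 5 = (a + b) ^ 5`, so `t = b / a`
satisfies `t ^ 5 = (t + 1) ^ 5 = 1`, which is impossible in characteristic 2.
-/

open Polynomial

section CharTwo

theorem add_one_pow_five_ne_one_of_pow_five_eq_one {R : Type*} [CommRing R] [Nontrivial R]
    [CharP R 2] {t : R} (ht : t ^ 5 = 1) : (t + 1) ^ 5 ≠ 1 := by
  intro h
  have two : (2 : R) = 0 := CharTwo.two_eq_zero
  have h4 : t ^ 4 = t + 1 := by
    linear_combination h - ht - (2 * t ^ 4 + 5 * t ^ 3 + 5 * t ^ 2 + 3 * t + 1) * two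
  have h2 : t ^ 2 = t + 1 := by linear_combination ht - t * h4 - t * two
  exact one_ne_zero (by linear_combination h4 - (t ^ 2 + t + 2) * h2 - t * two : (1 : R) = 0)

theorem sub_pow_five_comm {R : Type*} [CommRing R] [CharP R 2] (x y : R) :
    (x - y) ^ 5 = (y - x) ^ 5 := by
  rw [← neg_sub, Odd.neg_pow (by decide), CharTwo.neg_eq]

variable {F : Type*} [Field F] [CharP F 2]

theorem eq_zero_of_pow_five_eq_of_add_pow_five_eq {a b : F} (hab : a ^ 5 = b ^ 5)
    (h : (a + b) ^ 5 = a ^ 5) : a = 0 := by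
  by_contra ha
  have ha5 : a ^ 5 ≠ 0 := pow_ne_zero 5 ha
  refine add_one_pow_five_ne_one_of_pow_five_eq_one (t := b / a) ?_ ?_
  · rw [div_pow, ← hab, div_self ha5]
  · rw [div_add_one ha, add_comm, div_pow, h, div_self ha5]

theorem eq_of_sub_pow_five_eq {x y z : F} (h₁ : (x - y) ^ 5 = (y - z) ^ 5)
    (h₂ : (y - z) ^ 5 = (x - z) ^ 5) : x = y := by
  rw [← sub_eq_zero]
  refine eq_zero_of_pow_five_eq_of_add_pow_five_eq h₁ ?_
  rw [sub_add_sub_cancel, ← h₂, h₁]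

end CharTwo

theorem exists_injOn_cube_roots_of_unity (R : Type*) [CommRing R] [IsDomain R] :
    ∃ g : R → Fin 3, Set.InjOn g {w | w ^ 3 = 1} := by
  have hroots : {w : R | w ^ 3 = 1} = ↑(nthRootsFinset 3 (1 : R)) := by
    ext; simp
  have hcard : (nthRootsFinset 3 (1 : R)).card ≤ 3 := by
    classical
    rw [nthRootsFinset_def]
    exact (Multiset.toFinset_card_le _).trans (card_nthRoots 3 1)
  obtain ⟨g, -, hg⟩ := Set.Finite.exists_injOn_of_encard_le (t := (Set.univ : Set (Fin 3)))
    (hroots ▸ Finset.finite_toSet _) (by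
      rw [hroots, Set.encard_coe_eq_coe_finsetCard, Set.encard_univ]
      simpa using hcard)
  exact ⟨g, hg⟩

theorem pow_five_pow_three_eq_one {K : Type*} [GroupWithZero K] [Fintype K]
    (hK : Fintype.card K = 16) {a : K} (ha : a ≠ 0) : (a ^ 5) ^ 3 = 1 := by
  rw [← pow_mul]
  simpa [hK] using FiniteField.pow_card_sub_one_eq_one a ha

theorem exists_mono_triangle_free_coloring_of_card_eq_sixteen {F : Type*} [Field F] [Fintype F]
    [CharP F 2] (hF : Fintype.card F = 16) :
    ∃ c : F → F → Fin 3, (∀ x y, c x y = c y x) ∧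
      ¬ ∃ x y z, x ≠ y ∧ y ≠ z ∧ x ≠ z ∧ c x y = c y z ∧ c y z = c x z := by
  obtain ⟨g, hg⟩ := exists_injOn_cube_roots_of_unity F
  have hcube {x y : F} (h : x ≠ y) : (x - y) ^ 5 ∈ {w : F | w ^ 3 = 1} :=
    pow_five_pow_three_eq_one hF (sub_ne_zero.2 h)
  refine ⟨fun x y => g ((x - y) ^ 5), fun x y => congrArg g (sub_pow_five_comm x y), ?_⟩
  rintro ⟨x, y, z, hxy, hyz, hxz, h₁, h₂⟩
  exact hxy <|
    eq_of_sub_pow_five_eq (hg (hcube hxy) (hcube hyz) h₁) (hg (hcube hyz) (hcube hxz) h₂)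

theorem no_mono_triangle_K16 :
    ∃ c : Fin 16 → Fin 16 → Fin 3,
      (∀ x y, c x y = c y x) ∧
      ¬ ∃ x y z : Fin 16, x ≠ y ∧ y ≠ z ∧ x ≠ z ∧
        c x y = c y z ∧ c y z = c x z := by
  let F := GaloisField 2 4
  let _ : Fintype F := Fintype.ofFinite F
  have hF : Fintype.card F = 16 := by
    rw [Fintype.card_eq_nat_card, GaloisField.card 2 4 (by norm_num)]
    norm_num
  obtain ⟨c, hsymm, hfree⟩ := exists_mono_triangle_free_coloring_of_card_eq_sixteen hF
  let e : Fin 16 ≃ F := (Fintype.equivFinOfCardEq hF).symm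
  refine ⟨fun x y => c (e x) (e y), fun x y => hsymm _ _, ?_⟩
  rintro ⟨x, y, z, hxy, hyz, hxz, hmono⟩
  exact hfree ⟨e x, e y, e z, e.injective.ne hxy, e.injective.ne hyz, e.injective.ne hxz, hmono⟩
end

section
/- For every edge coloring of the complete graph on 17 vertices in three colors there exists at least one monochromatic triangle. Precisely: for every symmetric function c : Fin 17 → Fin 17 → Fin 3 there exist three pairwise distinct vertices x, y, z in Fin 17 with c x y = c y z = c x z. -/
/-!
Pick a vertex `v`. Among its 16 edges some colour `a` occurs at least 6 times; an edge of colour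
`a` between two of those 6 neighbours would close a monochromatic triangle with `v`, so the 6
vertices span a 2-coloured complete graph, and the same argument applies there. In general,
more than `b k` vertices force a monochromatic triangle in any `k`-colouring, where `b 0 = 1` and
`b (k + 1) = (k + 1) * b k + 1` (this `b` is `triangleRamseyBound`); here `b 3 = 16`.
-/

open Finset

def triangleRamseyBound : ℕ → ℕ
  | 0 => 1
  | k + 1 => (k + 1) * triangleRamseyBound k + 1

theorem exists_monochromatic_triangle_of_bound_lt_card {V α : Type*} [DecidableEq V]
    [DecidableEq α] (c : V → V → α) (k : ℕ) (S : Finset α) (s : Finset V) (hS : #S = k)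
    (hcol : ∀ x ∈ s, ∀ y ∈ s, x ≠ y → c x y ∈ S) (hs : triangleRamseyBound k < #s) :
    ∃ x y z, x ≠ y ∧ y ≠ z ∧ x ≠ z ∧ c x y = c y z ∧ c y z = c x z := by
  induction k generalizing S s with
  | zero =>
    obtain ⟨x, hx, y, hy, hxy⟩ := one_lt_card.mp hs
    simpa [card_eq_zero.mp hS] using hcol x hx y hy hxy
  | succ k ih =>
    obtain ⟨v, hv⟩ := card_pos.mp (by omega : 0 < #s)
    obtain ⟨a, haS, ht⟩ := exists_lt_card_fiber_of_mul_lt_card_of_maps_to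
      (s := s.erase v) (t := S) (f := c v) (n := triangleRamseyBound k)
      (fun y hy ↦ hcol v hv y (mem_of_mem_erase hy) (ne_of_mem_erase hy).symm)
      (by rw [card_erase_of_mem hv, hS]; simp only [triangleRamseyBound] at hs; omega)
    set t := (s.erase v).filter (c v · = a)
    have mem_t {x} (hx : x ∈ t) : x ≠ v ∧ x ∈ s ∧ c v x = a := by
      simpa only [t, mem_filter, mem_erase, and_assoc] using hx
    by_cases hclose : ∃ x ∈ t, ∃ y ∈ t, x ≠ y ∧ c x y = a
    · obtain ⟨x, hx, y, hy, hxy, hca⟩ := hclose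
      obtain ⟨hxv, -, hvx⟩ := mem_t hx
      obtain ⟨hyv, -, hvy⟩ := mem_t hy
      exact ⟨v, x, y, hxv.symm, hxy, hyv.symm, hvx.trans hca.symm, hca.trans hvy.symm⟩
    · push Not at hclose
      refine ih (S.erase a) t (by rw [card_erase_of_mem haS, hS]; rfl) ?_ ht
      intro x hx y hy hxy
      exact mem_erase.mpr ⟨hclose x hx y hy hxy, hcol x (mem_t hx).2.1 y (mem_t hy).2.1 hxy⟩

theorem mono_triangle_K17 :
    ∀ c : Fin 17 → Fin 17 → Fin 3,
      (∀ x y, c x y = c y x) →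
      ∃ x y z : Fin 17, x ≠ y ∧ y ≠ z ∧ x ≠ z ∧
        c x y = c y z ∧ c y z = c x z := by
  intro c _
  exact exists_monochromatic_triangle_of_bound_lt_card c 3 univ univ rfl
    (fun _ _ _ _ _ ↦ mem_univ _) (by decide)
end

section
/- The Ramsey number R(3,3,3) equals 17. Precisely: 17 is the least natural number n such that every symmetric function c : Fin n → Fin n → Fin 3 admits three pairwise distinct vertices x, y, z with c x y = c y z = c x z. -/
/-!
Upper bound: fix a vertex `v` of a `k`-coloured complete graph. By pigeonhole some colour `a`
occurs on more than `triangleRamseyBound (k - 1)` edges at `v`. If two of those neighbours are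
joined by an `a`-edge they form an `a`-triangle with `v`; otherwise the neighbourhood is coloured
with the remaining `k - 1` colours and induction applies. For three colours the bound is `16`.

Lower bound (Greenwood–Gleason): colour the edge `xy` of the complete graph on `GF(16)` by the
coset of `x - y` modulo the cubes of `GF(16)ˣ`. Each coset is sum-free, and in a triangle
`(x - y) + (y - z) = x - z`, so no triangle is monochromatic.
-/

open Finset

def IsMonochromaticTriangle {V α : Type*} (c : V → V → α) (x y z : V) : Prop :=
  x ≠ y ∧ y ≠ z ∧ x ≠ z ∧ c x y = c y z ∧ c y z = c x z

theorem IsMonochromaticTriangle.map {V W α : Type*} {c : W → W → α} {e : V → W}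
    (he : Function.Injective e) {x y z : V}
    (h : IsMonochromaticTriangle (fun x y => c (e x) (e y)) x y z) :
    IsMonochromaticTriangle c (e x) (e y) (e z) :=
  ⟨he.ne h.1, he.ne h.2.1, he.ne h.2.2.1, h.2.2.2⟩

theorem exists_isMonochromaticTriangle_of_triangleRamseyBound_lt_card
    {V α : Type*} [DecidableEq V] [DecidableEq α] (c : V → V → α) (C : Finset α) (s : Finset V)
    (hc : ∀ x ∈ s, ∀ y ∈ s, x ≠ y → c x y ∈ C) (hs : triangleRamseyBound #C < #s) :
    ∃ x ∈ s, ∃ y ∈ s, ∃ z ∈ s, IsMonochromaticTriangle c x y z := by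
  induction hk : #C generalizing C s with
  | zero =>
    obtain ⟨x, hx, y, hy, hxy⟩ := one_lt_card.mp (hk ▸ hs)
    simpa [card_eq_zero.mp hk] using hc x hx y hy hxy
  | succ k ih =>
    rw [hk, triangleRamseyBound] at hs
    obtain ⟨v, hv⟩ := card_pos.mp (by omega : 0 < #s)
    obtain ⟨a, haC, ha⟩ := exists_lt_card_fiber_of_mul_lt_card_of_maps_to
      (s := s.erase v) (f := c v) (n := triangleRamseyBound k)
      (fun x hx => hc v hv x (mem_erase.mp hx).2 (mem_erase.mp hx).1.symm)
      (by rw [card_erase_of_mem hv, hk]; omega)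
    set N := {x ∈ s.erase v | c v x = a}
    have hNs : N ⊆ s := filter_subset _ _ |>.trans (erase_subset _ _)
    by_cases hN : ∃ x ∈ N, ∃ y ∈ N, x ≠ y ∧ c x y = a
    · obtain ⟨x, hx, y, hy, hxy, hcxy⟩ := hN
      obtain ⟨hx, hvx⟩ := mem_filter.mp hx
      obtain ⟨hy, hvy⟩ := mem_filter.mp hy
      obtain ⟨hxv, hxs⟩ := mem_erase.mp hx
      obtain ⟨hyv, hys⟩ := mem_erase.mp hy
      exact ⟨v, hv, x, hxs, y, hys, hxv.symm, hxy, hyv.symm, by rw [hvx, hcxy], by rw [hcxy, hvy]⟩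
    · push Not at hN
      obtain ⟨x, hx, y, hy, z, hz, hxyz⟩ := ih (C.erase a) N
        (fun x hx y hy hxy => mem_erase.mpr ⟨hN x hx y hy hxy, hc x (hNs hx) y (hNs hy) hxy⟩)
        (by rwa [card_erase_of_mem haC, hk]) (by rw [card_erase_of_mem haC, hk]; rfl)
      exact ⟨x, hNs hx, y, hNs hy, z, hNs hz, hxyz⟩

section XorColoring

variable {G α : Type*} [XorOp G] [Zero G] [LawfulXor G]

theorem not_isMonochromaticTriangle_xor (f : G → α)
    (hf : ∀ d e, d ≠ 0 → e ≠ 0 → d ≠ e → f d = f e → f (d ^^^ e) ≠ f d) (x y z : G) :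
    ¬IsMonochromaticTriangle (fun x y => f (x ^^^ y)) x y z := by
  rintro ⟨hxy, hyz, hxz, h₁, h₂⟩
  have hsum : (x ^^^ y) ^^^ (y ^^^ z) = x ^^^ z := by rw [xor_assoc, xor_cancel_left]
  refine hf (x ^^^ y) (y ^^^ z) (by simpa) (by simpa) (fun h => hxz ?_) h₁
    (hsum ▸ (h₁.trans h₂).symm)
  rw [xor_comm y] at h
  exact (xor_left_involutive y).injective h

end XorColoring

-- `Fin (2 ^ 4)` with `^^^` is the additive group of `GF(16) = 𝔽₂[t]/(t⁴ + t + 1)`, bit `i` being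
-- the coefficient of `tⁱ`; colour `i` is the coset `tⁱ · {cubes}`, and `0` gets the junk colour `2`.
def greenwoodGleasonColor : Fin (2 ^ 4) → Fin 3
  | 1 | 8 | 12 | 10 | 15 => 0
  | 2 | 3 | 11 | 7 | 13 => 1
  | _ => 2

theorem greenwoodGleasonColor_sumFree (d e : Fin (2 ^ 4)) (hd : d ≠ 0) (he : e ≠ 0) (hde : d ≠ e)
    (h : greenwoodGleasonColor d = greenwoodGleasonColor e) :
    greenwoodGleasonColor (d ^^^ e) ≠ greenwoodGleasonColor d := by
  revert d e; decide

theorem ramsey_three_three_three :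
    IsLeast {n : ℕ | ∀ c : Fin n → Fin n → Fin 3,
      (∀ x y, c x y = c y x) →
      ∃ x y z : Fin n, x ≠ y ∧ y ≠ z ∧ x ≠ z ∧
        c x y = c y z ∧ c y z = c x z} 17 := by
  refine ⟨fun c _ => ?_, fun n hn => ?_⟩
  · obtain ⟨x, -, y, -, z, -, h⟩ :=
      exists_isMonochromaticTriangle_of_triangleRamseyBound_lt_card c univ univ (by simp)
        (by simp [triangleRamseyBound])
    exact ⟨x, y, z, h⟩
  · by_contra! hn17
    have e : Fin n ↪ Fin (2 ^ 4) := Fin.castLEEmb (by omega)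
    obtain ⟨x, y, z, h⟩ := hn (fun x y => greenwoodGleasonColor (e x ^^^ e y))
      fun x y => by rw [LawfulXor.xor_comm]
    exact not_isMonochromaticTriangle_xor _ greenwoodGleasonColor_sumFree _ _ _
      (IsMonochromaticTriangle.map e.injective h)
end

section
/- The complete graph on 17 vertices with one edge removed admits an edge coloring in three colors with no monochromatic triangle. Precisely: there exist two distinct vertices a, b in Fin 17 and a symmetric function c : Fin 17 → Fin 17 → Fin 3 such that there are no three pairwise distinct vertices x, y, z in Fin 17, with {x, y, z} not containing both a and b, satisfying c x y = c y z = c x z. -/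
/-!
Greenwood–Gleason: colour the edge `{x, y}` of the complete graph on `𝔽₁₆` by `(x - y) ^ 5`, which is
a cube root of unity, i.e. by the class of `x - y` modulo cubes. A monochromatic triangle `x, y, z`
would give `u = (y - z) / (x - y)` with `u ^ 5 = (1 + u) ^ 5 = 1`, impossible in characteristic 2.
Doubling a vertex of this colouring of `K₁₆` colours `K₁₇` minus the edge joining the twins: a
triangle avoiding that edge contains at most one twin, so it is a triangle of `K₁₆`.
-/

open Polynomial

def IsMonoTriangle {V κ : Type*} (c : V → V → κ) (x y z : V) : Prop :=
  x ≠ y ∧ y ≠ z ∧ x ≠ z ∧ c x y = c y z ∧ c y z = c x z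

section Recoloring

variable {V W κ κ' : Type*} {c : V → V → κ}

theorem IsMonoTriangle.of_comp {g : κ → κ'} {s : Set κ} (hg : Set.InjOn g s)
    (hc : ∀ x y, x ≠ y → c x y ∈ s) {x y z : V}
    (h : IsMonoTriangle (fun x y => g (c x y)) x y z) : IsMonoTriangle c x y z := by
  obtain ⟨hxy, hyz, hxz, h₁, h₂⟩ := h
  exact ⟨hxy, hyz, hxz, hg (hc _ _ hxy) (hc _ _ hyz) h₁, hg (hc _ _ hyz) (hc _ _ hxz) h₂⟩

theorem IsMonoTriangle.comap {f : W → V} {x y z : W}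
    (h : IsMonoTriangle (fun i j => c (f i) (f j)) x y z)
    (hxy : f x ≠ f y) (hyz : f y ≠ f z) (hxz : f x ≠ f z) :
    IsMonoTriangle c (f x) (f y) (f z) :=
  ⟨hxy, hyz, hxz, h.2.2.2⟩

end Recoloring

theorem Fin.injOn_predAbove {n : ℕ} {p : Fin n} {s : Set (Fin (n + 1))}
    (hs : ¬ (p.castSucc ∈ s ∧ p.succ ∈ s)) : Set.InjOn p.predAbove s := by
  intro i hi j hj hij
  by_cases hc : p.castSucc ∈ s
  · have hsucc : p.succ ∉ s := fun h => hs ⟨hc, h⟩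
    rw [← succ_succAbove_predAbove (ne_of_mem_of_not_mem hi hsucc), hij,
      succ_succAbove_predAbove (ne_of_mem_of_not_mem hj hsucc)]
  · rw [← succAbove_predAbove (ne_of_mem_of_not_mem hi hc), hij,
      succAbove_predAbove (ne_of_mem_of_not_mem hj hc)]

theorem one_add_pow_five_ne_one {R : Type*} [CommRing R] [Nontrivial R] [CharP R 2] {u : R}
    (hu : u ^ 5 = 1) : (1 + u) ^ 5 ≠ 1 := by
  intro h
  have two : (2 : R) = 0 := CharTwo.two_eq_zero
  -- in characteristic 2, `(1 + u) ^ 5 = 1 + u + u ^ 4 + u ^ 5`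
  have hcube_poly : u ^ 2 + u + 1 = 0 := by
    linear_combination u * h - (1 + u) * hu - u * (2 * u + 5 * u ^ 2 + 5 * u ^ 3 + 2 * u ^ 4) * two
  have hcube : u ^ 3 = 1 := by linear_combination (u - 1) * hcube_poly
  have hu1 : u = 1 := by linear_combination (u ^ 3 + 1) * hcube - u * hu
  exact one_ne_zero (by linear_combination hcube_poly - (u + 2) * hu1 - two : (1 : R) = 0)

theorem not_isMonoTriangle_sub_pow_five {F : Type*} [Field F] [CharP F 2] (x y z : F) :
    ¬ IsMonoTriangle (fun x y => (x - y) ^ 5) x y z := by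
  rintro ⟨hxy, -, -, h₁, h₂⟩
  dsimp only at h₁ h₂
  have hd : x - y ≠ 0 := sub_ne_zero.2 hxy
  refine one_add_pow_five_ne_one (u := (y - z) / (x - y)) ?_ ?_
  · rw [div_pow, ← h₁, div_self (pow_ne_zero 5 hd)]
  · rw [show 1 + (y - z) / (x - y) = (x - z) / (x - y) by field_simp; ring, div_pow, ← h₂, ← h₁,
      div_self (pow_ne_zero 5 hd)]

theorem sub_pow_five_pow_three {F : Type*} [Field F] [Fintype F] (hF : Fintype.card F = 16)
    {x y : F} (hxy : x ≠ y) : ((x - y) ^ 5) ^ 3 = 1 := by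
  rw [← pow_mul, show 5 * 3 = Fintype.card F - 1 by rw [hF]]
  exact FiniteField.pow_card_sub_one_eq_one _ (sub_ne_zero.2 hxy)

theorem exists_injOn_pow_eq_one (K : Type*) [CommRing K] [IsDomain K] (n : ℕ) [NeZero n] :
    ∃ g : K → Fin n, Set.InjOn g {w : K | w ^ n = 1} := by
  have hs : {w : K | w ^ n = 1} = nthRootsFinset n (1 : K) := by
    ext; simp [Nat.pos_of_neZero n]
  have hcard : (nthRootsFinset n (1 : K)).card ≤ n := by
    classical
    exact (Multiset.toFinset_card_le _).trans (card_nthRoots n 1)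
  obtain ⟨g, -, hg⟩ := (nthRootsFinset n (1 : K)).finite_toSet.exists_injOn_of_encard_le
    (t := (Set.univ : Set (Fin n))) (by simpa [Set.encard_coe_eq_coe_finsetCard] using hcard)
  exact ⟨g, hs ▸ hg⟩

theorem exists_symm_coloring_fin16_not_isMonoTriangle :
    ∃ c : Fin 16 → Fin 16 → Fin 3, (∀ x y, c x y = c y x) ∧ ∀ x y z, ¬ IsMonoTriangle c x y z := by
  let F := GaloisField 2 4
  let _ : Fintype F := Fintype.ofFinite F
  have hF : Fintype.card F = 16 := by
    rw [← Nat.card_eq_fintype_card, GaloisField.card 2 4 (by norm_num)]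
    rfl
  obtain ⟨g, hg⟩ := exists_injOn_pow_eq_one F 3
  let e : Fin 16 ≃ F := (Fintype.equivFinOfCardEq hF).symm
  refine ⟨fun i j => g ((e i - e j) ^ 5), fun i j => ?_, fun x y z h => ?_⟩
  · simp only [CharTwo.sub_eq_add, add_comm]
  · have h' := h.of_comp (c := fun i j => (e i - e j) ^ 5) hg
      fun i j hij => sub_pow_five_pow_three hF (e.injective.ne hij)
    exact not_isMonoTriangle_sub_pow_five _ _ _ <| h'.comap (f := e)
      (e.injective.ne h'.1) (e.injective.ne h'.2.1) (e.injective.ne h'.2.2.1)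

theorem no_mono_triangle_K17_minus_edge :
    ∃ (a b : Fin 17) (c : Fin 17 → Fin 17 → Fin 3),
      a ≠ b ∧
      (∀ x y, c x y = c y x) ∧
      ¬ ∃ x y z : Fin 17, x ≠ y ∧ y ≠ z ∧ x ≠ z ∧
        ¬ (a ∈ ({x, y, z} : Set (Fin 17)) ∧ b ∈ ({x, y, z} : Set (Fin 17))) ∧
        c x y = c y z ∧ c y z = c x z := by
  obtain ⟨c, hsymm, hfree⟩ := exists_symm_coloring_fin16_not_isMonoTriangle
  let p : Fin 16 := 15
  refine ⟨p.castSucc, p.succ, fun i j => c (p.predAbove i) (p.predAbove j),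
    Fin.castSucc_lt_succ.ne, fun i j => hsymm _ _, ?_⟩
  rintro ⟨x, y, z, hxy, hyz, hxz, hedge, hmono⟩
  have hinj := Fin.injOn_predAbove hedge
  exact hfree _ _ _ <| IsMonoTriangle.comap ⟨hxy, hyz, hxz, hmono⟩
    (hinj.ne (by simp) (by simp) hxy) (hinj.ne (by simp) (by simp) hyz)
    (hinj.ne (by simp) (by simp) hxz)
end

section
/- There exists an edge coloring of the complete graph on 17 vertices in three colors whose monochromatic triangles all have the same color and number exactly 5. Precisely: there exist a symmetric function c : Fin 17 → Fin 17 → Fin 3 and a color k : Fin 3 such that every monochromatic triangle of c has color k, and the number of monochromatic triangles of c (counted as 3-element subsets of Fin 17) is exactly 5. -/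
/-!
Greenwood and Gleason colour `K₁₆` without monochromatic triangles: identify the vertices with
`𝔽₁₆ ≅ 𝔽₂⁴`, i.e. with the numbers below `16` under bitwise xor, and colour the edge `{a, b}` by
the coset of `a - b` modulo the cubes in `𝔽₁₆ˣ`. Each coset `C` is sum-free, while a monochromatic
triangle `{x, y, z}` would give `x - y, y - z ∈ C` with `(x - y) + (y - z) = x - z ∈ C`.

Add a seventeenth vertex as a twin of `0`, coloured towards every other vertex as `0` is, and give
the edge between the twins some colour `k`. A monochromatic triangle must contain two vertices with
the same image in `K₁₆`, i.e. both twins, and its third vertex is then one of the five neighbours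
of `0` in colour `k`.
-/

section MonoTriangles

variable {V W K : Type*}

def monoTriangles [DecidableEq V] (c : V → V → K) : Set (Finset V) :=
  {s | ∃ x y z : V, x ≠ y ∧ y ≠ z ∧ x ≠ z ∧ s = {x, y, z} ∧ c x y = c y z ∧ c y z = c x z}

def NoMonoTriangle (c : V → V → K) : Prop :=
  ∀ x y z, x ≠ y → y ≠ z → x ≠ z → c x y = c y z → c y z = c x z → False

theorem NoMonoTriangle.collide_of_mono {c₀ : W → W → K} (h : NoMonoTriangle c₀) (φ : V → W)
    {x y z : V} (h₁ : c₀ (φ x) (φ y) = c₀ (φ y) (φ z)) (h₂ : c₀ (φ y) (φ z) = c₀ (φ x) (φ z)) :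
    φ x = φ y ∨ φ y = φ z ∨ φ x = φ z := by
  by_contra! hne
  exact h _ _ _ hne.1 hne.2.1 hne.2.2 h₁ h₂

end MonoTriangles

section Twins

variable {V W K : Type*} {c₀ : W → W → K} (hc₀ : NoMonoTriangle c₀)
  {φ : V → W} {p q : V} (hφpq : φ p = φ q)
  (hφ : ∀ x y, φ x = φ y → x = y ∨ (x = p ∧ y = q) ∨ (x = q ∧ y = p))
include hc₀ hφpq hφ

theorem color_eq_of_mono_of_twin {x y z : V} (hxy : x ≠ y) (hyz : y ≠ z) (hxz : x ≠ z)
    (h₁ : c₀ (φ x) (φ y) = c₀ (φ y) (φ z)) (h₂ : c₀ (φ y) (φ z) = c₀ (φ x) (φ z)) :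
    c₀ (φ x) (φ y) = c₀ (φ p) (φ q) := by
  rcases hc₀.collide_of_mono φ h₁ h₂ with h | h | h <;>
  rcases hφ _ _ h with heq | ⟨rfl, rfl⟩ | ⟨rfl, rfl⟩ <;> grind

theorem mem_monoTriangles_of_twin_iff [DecidableEq V] (hsymm : ∀ a b, c₀ a b = c₀ b a)
    (hpq : p ≠ q) {s : Finset V} :
    s ∈ monoTriangles (fun x y => c₀ (φ x) (φ y)) ↔
      ∃ u, u ≠ p ∧ u ≠ q ∧ c₀ (φ p) (φ u) = c₀ (φ p) (φ q) ∧ s = {p, q, u} := by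
  constructor
  · rintro ⟨x, y, z, hxy, hyz, hxz, rfl, h₁, h₂⟩
    rcases hc₀.collide_of_mono φ h₁ h₂ with h | h | h <;>
    rcases hφ _ _ h with heq | ⟨rfl, rfl⟩ | ⟨rfl, rfl⟩
    any_goals contradiction
    exacts [⟨z, by grind⟩, ⟨z, by grind⟩, ⟨x, by grind⟩, ⟨x, by grind⟩, ⟨y, by grind⟩,
      ⟨y, by grind⟩]
  · rintro ⟨u, hup, huq, hu, rfl⟩
    exact ⟨p, q, u, hpq, huq.symm, hup.symm, rfl, by simp only [← hφpq, hu], by simp only [hφpq]⟩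

theorem ncard_monoTriangles_of_twin [DecidableEq V] (hsymm : ∀ a b, c₀ a b = c₀ b a)
    (hpq : p ≠ q) :
    (monoTriangles fun x y => c₀ (φ x) (φ y)).ncard =
      {u | u ≠ p ∧ u ≠ q ∧ c₀ (φ p) (φ u) = c₀ (φ p) (φ q)}.ncard := by
  have hinj : Set.InjOn (fun u => ({p, q, u} : Finset V))
      {u | u ≠ p ∧ u ≠ q ∧ c₀ (φ p) (φ u) = c₀ (φ p) (φ q)} := by
    intro u hu v hv huv
    have : u ∈ ({p, q, v} : Finset V) := by simp only at huv; simp [← huv]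
    grind
  rw [← hinj.ncard_image]
  congr 1
  ext s
  rw [mem_monoTriangles_of_twin_iff hc₀ hφpq hφ hsymm hpq]
  grind

end Twins

section XorColoring

variable {K : Type*}

def xorColoring {n : ℕ} (f : ℕ → K) (a b : Fin n) : K := f ((a : ℕ) ^^^ b)

theorem xorColoring_comm {n : ℕ} (f : ℕ → K) (a b : Fin n) :
    xorColoring f a b = xorColoring f b a := by
  rw [xorColoring, xorColoring, Nat.xor_comm]

def IsXorSumFree (f : ℕ → K) (m : ℕ) : Prop :=
  ∀ a < 2 ^ m, ∀ b < 2 ^ m, a ≠ 0 → b ≠ 0 → a ≠ b → f a = f b → f (a ^^^ b) ≠ f a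

theorem IsXorSumFree.noMonoTriangle {f : ℕ → K} {m : ℕ} (hf : IsXorSumFree f m) :
    NoMonoTriangle (xorColoring (n := 2 ^ m) f) := by
  intro x y z hxy hyz hxz h₁ h₂
  have hne {a b : Fin (2 ^ m)} (h : a ≠ b) : (a : ℕ) ^^^ b ≠ 0 :=
    Nat.xor_ne_zero_iff.2 (Fin.val_ne_of_ne h)
  have hsum : ((x : ℕ) ^^^ y) ^^^ (y ^^^ z) = x ^^^ z := by
    rw [Nat.xor_assoc, Nat.xor_xor_cancel_left]
  refine hf _ (Nat.xor_lt_two_pow x.2 y.2) _ (Nat.xor_lt_two_pow y.2 z.2) (hne hxy) (hne hyz)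
    ?_ h₁ (by rw [hsum]; exact (h₁.trans h₂).symm)
  rw [Nat.xor_comm (x : ℕ), Ne, Nat.xor_right_inj]
  exact Fin.val_ne_of_ne hxz

end XorColoring

/-- With `𝔽₁₆ = 𝔽₂[α]/(α⁴ + α + 1)` and `a < 16` read in binary as a polynomial in `α`,
colour `i` is the coset `α ^ i • C` of the cubes `C = {α ^ (3 * j)} = {1, 8, 12, 10, 15}`;
`0` gets colour `0`. -/
def cubeCoset (a : ℕ) : Fin 3 :=
  if a ∈ [2, 3, 7, 11, 13] then 1 else if a ∈ [4, 5, 6, 9, 14] then 2 else 0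

set_option synthInstance.maxSize 1024 in
theorem isXorSumFree_cubeCoset : IsXorSumFree cubeCoset 4 := by
  unfold IsXorSumFree
  decide

def twinFold (i : Fin 17) : Fin 16 := Fin.ofNat 16 i

theorem eq_or_twins_of_twinFold_eq (x y : Fin 17) (h : twinFold x = twinFold y) :
    x = y ∨ (x = 0 ∧ y = 16) ∨ (x = 16 ∧ y = 0) := by
  revert x y
  decide

theorem exists_coloring_K17_exactly_five_mono_triangles_one_color :
    ∃ (c : Fin 17 → Fin 17 → Fin 3) (k : Fin 3),
      (∀ x y, c x y = c y x) ∧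
      (∀ x y z : Fin 17, x ≠ y → y ≠ z → x ≠ z →
        c x y = c y z → c y z = c x z → c x y = k) ∧
      {s : Finset (Fin 17) | ∃ x y z : Fin 17, x ≠ y ∧ y ≠ z ∧ x ≠ z ∧
        s = {x, y, z} ∧ c x y = c y z ∧ c y z = c x z}.ncard = 5 := by
  have hfree : NoMonoTriangle (xorColoring (n := 16) cubeCoset) :=
    isXorSumFree_cubeCoset.noMonoTriangle
  have htwin : twinFold 0 = twinFold 16 := rfl
  refine ⟨fun x y => xorColoring cubeCoset (twinFold x) (twinFold y), 0,
    fun x y => xorColoring_comm _ _ _, fun x y z hxy hyz hxz h₁ h₂ => ?_, ?_⟩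
  · exact color_eq_of_mono_of_twin hfree htwin eq_or_twins_of_twinFold_eq hxy hyz hxz h₁ h₂
  · change (monoTriangles _).ncard = 5
    rw [ncard_monoTriangles_of_twin hfree htwin eq_or_twins_of_twinFold_eq (xorColoring_comm _)
      (by decide), Set.ncard_eq_toFinset_card']
    decide
end
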